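/- arXiv:1310.6727 — 2 statements merged into one kernel-verified Lean document; each statement's English description precedes it below -/
import Mathlib

section
/- Let K be a number field with ring of integers O_K and let D_K be the absolute value of the discriminant of K over ℚ. Then every ideal class of O_K contains a nonzero integral ideal 𝔟 ⊆ O_K such that every prime ideal 𝔭 of O_K dividing 𝔟 has residue field of cardinality at most √D_K. -/
open scoped NNReal
open IsDedekindDomain NumberField Polynomial

namespace Effective

noncomputable section

variable {K : Type*} [Field K] [NumberField K]

/-- The cardinality `N(v)` of the residue field at a finite place `v`. -/
def placeNorm (v : HeightOneSpectrum (𝓞 K)) : ℕ := Ideal.absNorm v.asIdeal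

lemma placeNorm_ne_zero (v : HeightOneSpectrum (𝓞 K)) : (placeNorm v : ℝ≥0) ≠ 0 := by
  have h : Fintype (𝓞 K ⧸ v.asIdeal) := @Fintype.ofFinite _ (Ideal.finiteQuotientOfFreeOfNeBot v.asIdeal v.ne_bot)
  have : Finite (𝓞 K ⧸ v.asIdeal) := Finite.of_fintype _
  simpa [placeNorm] using (Ideal.absNorm_ne_zero_iff v.asIdeal).mpr this

/-- The residue characteristic of a finite place. -/
def resChar (v : HeightOneSpectrum (𝓞 K)) : ℕ := ringChar (𝓞 K ⧸ v.asIdeal)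

/-- The normalized `v`-adic absolute value `|x|_v = N(v)^{-ord_v x}`. -/
def vAbs (v : HeightOneSpectrum (𝓞 K)) (x : K) : ℝ :=
  WithZeroMulInt.toNNReal (placeNorm_ne_zero v) (v.valuation K x)

/-- The absolute multiplicative Weil height of a point `(x 0, …, x (m-1)) ∈ Kᵐ`. -/
def mulHeight {m : ℕ} (x : Fin m → K) : ℝ :=
  ((∏ w : InfinitePlace K, (⨆ i, w (x i)) ^ w.mult) *
      ∏ᶠ v : HeightOneSpectrum (𝓞 K), ⨆ i, vAbs v (x i)) ^
    ((Module.finrank ℚ K : ℝ)⁻¹)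

/-- The absolute logarithmic Weil height of a point of `Kᵐ`. -/
def logHeight {m : ℕ} (x : Fin m → K) : ℝ := Real.log (mulHeight x)

/-- The absolute logarithmic Weil height of `α ∈ K`. -/
def logHeight₁ (α : K) : ℝ := logHeight ![1, α]

/-- The absolute multiplicative Weil height of `α ∈ K`. -/
def mulHeight₁ (α : K) : ℝ := mulHeight ![1, α]

/-- The absolute logarithmic Weil height of a polynomial, i.e. of the point
`(1, c₀, …, c_n)` formed by `1` and its coefficients. -/
def polyLogHeight (f : K[X]) : ℝ :=
  logHeight (Fin.cons 1 fun i : Fin (f.natDegree + 1) => f.coeff i)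

/-- The Sylvester matrix of two polynomials `p`, `q` with formal degrees `m`, `l`. -/
def sylvester (m l : ℕ) (p q : K[X]) : Matrix (Fin (l + m)) (Fin (l + m)) K :=
  Matrix.of fun i j =>
    if (i : ℕ) < l then
      (if (i : ℕ) ≤ (j : ℕ) ∧ (j : ℕ) ≤ (i : ℕ) + m then p.coeff (m + i - j) else 0)
    else
      (if (i : ℕ) - l ≤ (j : ℕ) ∧ (j : ℕ) ≤ ((i : ℕ) - l) + l then
        q.coeff (l + ((i : ℕ) - l) - j) else 0)

/-- The discriminant of a polynomial over a field (of characteristic zero), defined by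
`Δ(f) = (-1)^(n(n-1)/2) lc(f)⁻¹ Res(f, f')`. -/
def polyDisc (f : K[X]) : K :=
  (-1 : K) ^ (f.natDegree * (f.natDegree - 1) / 2) * f.leadingCoeff⁻¹ *
    (sylvester f.natDegree (f.natDegree - 1) f (derivative f)).det

/-- The binary form `Σ_{i=0}^n β_i X^{n-i} Y^i` of degree `n` with coefficients `β`. -/
def binForm (n : ℕ) (β : Fin (n + 1) → K) : MvPolynomial (Fin 2) K :=
  ∑ i : Fin (n + 1),
    MvPolynomial.C (β i) * MvPolynomial.X 0 ^ (n - (i : ℕ)) * MvPolynomial.X 1 ^ (i : ℕ)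

/-- The `i`-th coefficient `β_i` (coefficient of `X^{n-i} Y^i`) of a binary form of degree `n`. -/
def bfCoeff (n : ℕ) (G : MvPolynomial (Fin 2) K) (i : Fin (n + 1)) : K :=
  MvPolynomial.coeff (Finsupp.single 0 (n - (i : ℕ)) + Finsupp.single 1 (i : ℕ)) G

/-- The pullback `ψ*G (X,Y) = G(αX + βY, γX + δY)` of a binary form by a matrix
`ψ = (α β; γ δ)`. -/
def pullback (ψ : Matrix (Fin 2) (Fin 2) K) (G : MvPolynomial (Fin 2) K) :
    MvPolynomial (Fin 2) K :=
  MvPolynomial.bind₁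
    (fun j : Fin 2 => MvPolynomial.C (ψ j 0) * MvPolynomial.X 0 +
      MvPolynomial.C (ψ j 1) * MvPolynomial.X 1) G

open scoped Classical in
/-- The discriminant of the binary form with coefficient vector `β`; writing the form as
`Y^k · (homogenization of g)` with `g(X) = G(X,1)`, it is `Δ(g)` if `k = 0`, it is
`lc(g)² Δ(g)` if `k = 1`, and it is `0` if `k ≥ 2`. -/
def discBF (n : ℕ) (β : Fin (n + 1) → K) : K :=
  let g : K[X] := ∑ i : Fin (n + 1), Polynomial.C (β i) * Polynomial.X ^ (n - (i : ℕ))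
  if g.natDegree = n then polyDisc g
  else if g ≠ 0 ∧ g.natDegree = n - 1 then g.leadingCoeff ^ 2 * polyDisc g
  else 0

/-- The absolute logarithmic Weil height of a binary form of degree `n`, i.e. the height of
the point `(1, β₀, …, β_n)`. -/
def bfLogHeight (n : ℕ) (G : MvPolynomial (Fin 2) K) : ℝ :=
  logHeight (Fin.cons 1 (bfCoeff n G))

/-- The absolute multiplicative Weil height of a binary form of degree `n`. -/
def bfMulHeight (n : ℕ) (G : MvPolynomial (Fin 2) K) : ℝ :=
  mulHeight (Fin.cons 1 (bfCoeff n G))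

/-- The ring of `T`-integers of `K`, for a finite set `T` of finite places of `K`. -/
def SInt (T : Finset (HeightOneSpectrum (𝓞 K))) : Subalgebra (𝓞 K) K :=
  Set.integer (T : Set (HeightOneSpectrum (𝓞 K))) K

/-- `x ∈ K` is a unit of the ring of `T`-integers `O_T`. -/
def IsSUnit (T : Finset (HeightOneSpectrum (𝓞 K))) (x : K) : Prop :=
  x ∈ SInt T ∧ ∃ y ∈ SInt T, x * y = 1

/-- The class number `h_T` of the ring of `T`-integers. -/
def classNum (T : Finset (HeightOneSpectrum (𝓞 K))) : ℕ :=
  Nat.card (ClassGroup (SInt T))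

/-- `λ_T = log₂ h_T`. -/
def lam (T : Finset (HeightOneSpectrum (𝓞 K))) : ℝ := Real.logb 2 (classNum T)

/-- `N_T`, the product of the residue field cardinalities of the finite places in `T`. -/
def normProd (T : Finset (HeightOneSpectrum (𝓞 K))) : ℕ := ∏ v ∈ T, placeNorm v

/-- `n_T`, the product of the logarithms of the residue field cardinalities of the finite
places in `T`. -/
def logProd (T : Finset (HeightOneSpectrum (𝓞 K))) : ℝ := ∏ v ∈ T, Real.log (placeNorm v)

/-- The maximum of the residue characteristics of the finite places in `T`
(an empty maximum being `1`). -/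
def maxResChar (T : Finset (HeightOneSpectrum (𝓞 K))) : ℕ := max 1 (T.sup resChar)

variable (K) in
/-- The absolute value of the discriminant of `K` over `ℚ`. -/
def absDiscr : ℕ := (NumberField.discr K).natAbs

/-- A Weierstrass curve over `K` has good reduction at a finite place `v` if some
change of variables makes all its coefficients `v`-integral and its discriminant a `v`-unit. -/
def GoodReductionAt (W : WeierstrassCurve K) (v : HeightOneSpectrum (𝓞 K)) : Prop :=
  ∃ C : WeierstrassCurve.VariableChange K,
    v.valuation K (C • W).a₁ ≤ 1 ∧ v.valuation K (C • W).a₂ ≤ 1 ∧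
    v.valuation K (C • W).a₃ ≤ 1 ∧ v.valuation K (C • W).a₄ ≤ 1 ∧
    v.valuation K (C • W).a₆ ≤ 1 ∧ v.valuation K (C • W).Δ = 1

/-- Good reduction outside a finite set `S` of finite places. -/
def GoodReductionOutside (W : WeierstrassCurve K) (S : Finset (HeightOneSpectrum (𝓞 K))) :
    Prop :=
  ∀ v : HeightOneSpectrum (𝓞 K), v ∉ S → GoodReductionAt W v

/-- Two Weierstrass curves over `K` are `K`-isomorphic if they are related by an admissible
change of variables. -/
def WIso (W W' : WeierstrassCurve K) : Prop :=
  ∃ C : WeierstrassCurve.VariableChange K, C • W = W'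

/-- The Weierstrass curve `Y² = f(X)` attached to a cubic polynomial `f`. -/
def curveOf (f : K[X]) : WeierstrassCurve K :=
  ⟨0, f.coeff 2, 0, f.coeff 1, f.coeff 0⟩

/-- The group of `T`-units of `Kˣ`. -/
def SUnitGroup (T : Finset (HeightOneSpectrum (𝓞 K))) : Subgroup Kˣ :=
  Set.unit (T : Set (HeightOneSpectrum (𝓞 K))) K

/-- `x ∈ Kˣ` is a torsion element. -/
def IsTorsionUnit (x : Kˣ) : Prop := ∃ n : ℕ, n ≠ 0 ∧ x ^ n = 1

/-- The family `ε` consists of `T`-units and generates the group of `T`-units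
modulo its torsion subgroup. -/
def GeneratesModTorsion (T : Finset (HeightOneSpectrum (𝓞 K))) {r : ℕ}
    (ε : Fin r → Kˣ) : Prop :=
  (∀ i, ε i ∈ SUnitGroup T) ∧
    ∀ x ∈ SUnitGroup T, ∃ (t : Kˣ) (k : Fin r → ℤ),
      t ∈ SUnitGroup T ∧ IsTorsionUnit t ∧ x = t * ∏ i, ε i ^ k i

/-- `ζ` is a generator of the torsion subgroup of the group of `T`-units. -/
def GeneratesTorsion (T : Finset (HeightOneSpectrum (𝓞 K))) (ζ : Kˣ) : Prop :=
  ζ ∈ SUnitGroup T ∧ IsTorsionUnit ζ ∧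
    ∀ x ∈ SUnitGroup T, IsTorsionUnit x → x ∈ Subgroup.zpowers ζ

end

end Effective

/-
Minkowski's theorem gives, in every ideal class, an integral ideal of norm at most
`(4/π)^{r₂} · n!/nⁿ · √D_K`. The Minkowski constant `(4/π)^{r₂} n!/nⁿ` is at most `1`, because
`4/π < 2`, `2 r₂ ≤ n` and `n! 2^{n-1} ≤ nⁿ` (Bernoulli: `2 nⁿ ≤ (n+1)ⁿ`). A prime dividing the
ideal has norm, i.e. residue field cardinality, at most the norm of the ideal.
-/

open scoped Nat Real nonZeroDivisors

namespace Nat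

theorem two_mul_pow_self_le_succ_pow {n : ℕ} (hn : n ≠ 0) : 2 * n ^ n ≤ (n + 1) ^ n := by
  have bernoulli := pow_add_mul_le_add_pow (a := n) (b := 1) n.zero_le (by omega) n
  rwa [Nat.cast_id, mul_one, mul_pow_sub_one hn, ← two_mul] at bernoulli

theorem factorial_mul_two_pow_pred_le_pow_self : ∀ n : ℕ, n ! * 2 ^ (n - 1) ≤ n ^ n
  | 0 => le_rfl
  | 1 => le_rfl
  | n + 2 => by
    have ih := factorial_mul_two_pow_pred_le_pow_self (n + 1)
    calc (n + 2)! * 2 ^ (n + 1) = (n + 2) * (2 * ((n + 1)! * 2 ^ n)) := by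
          rw [Nat.factorial_succ]; ring
      _ ≤ (n + 2) * (2 * (n + 1) ^ (n + 1)) := by gcongr; exact ih
      _ ≤ (n + 2) * (n + 2) ^ (n + 1) := by
          gcongr; exact two_mul_pow_self_le_succ_pow n.succ_ne_zero
      _ = (n + 2) ^ (n + 2) := by ring

end Nat

theorem four_div_pi_pow_mul_factorial_div_pow_self_le_one {n s : ℕ} (hs : 2 * s ≤ n) :
    (4 / π) ^ s * (n ! / n ^ n : ℝ) ≤ 1 := by
  have h4π : 4 / π ≤ 2 := by
    rw [div_le_iff₀ Real.pi_pos]; linarith [Real.pi_gt_three]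
  have hpow : (0 : ℝ) < n ^ n := mod_cast Nat.pow_self_pos
  calc (4 / π) ^ s * (n ! / n ^ n : ℝ) ≤ 2 ^ (n - 1) * (n ! / n ^ n : ℝ) := by
        gcongr
        calc (4 / π) ^ s ≤ (2 : ℝ) ^ s := by gcongr
          _ ≤ 2 ^ (n - 1) := pow_le_pow_right₀ one_le_two (by omega)
    _ ≤ 1 := by
      rw [mul_div_assoc', div_le_one hpow]
      exact_mod_cast (mul_comm _ _).trans_le (Nat.factorial_mul_two_pow_pred_le_pow_self n)

namespace Ideal

variable {S : Type*} [CommRing S] [IsDedekindDomain S] [Module.Free ℤ S] [Module.Finite ℤ S]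

theorem natCard_quotient_le_absNorm_of_dvd {P I : Ideal S} (hI : I ≠ ⊥) (h : P ∣ I) :
    Nat.card (S ⧸ P) ≤ absNorm I := by
  rw [← Submodule.cardQuot_apply, ← absNorm_apply]
  exact Nat.le_of_dvd (Nat.pos_of_ne_zero (absNorm_ne_zero_of_nonZeroDivisors
    ⟨I, mem_nonZeroDivisors_iff_ne_zero.mpr hI⟩)) (map_dvd absNorm h)

end Ideal

namespace NumberField

open InfinitePlace

variable {K : Type*} [Field K] [NumberField K]

theorem exists_ideal_in_class_of_absNorm_le_sqrt_abs_discr (C : ClassGroup (𝓞 K)) :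
    ∃ I : (Ideal (𝓞 K))⁰,
      ClassGroup.mk0 I = C ∧ (Ideal.absNorm (I : Ideal (𝓞 K)) : ℝ) ≤ √|(discr K : ℝ)| := by
  obtain ⟨I, hIC, hI⟩ := exists_ideal_in_class_of_norm_le C
  refine ⟨I, hIC, hI.trans ?_⟩
  rw [← mul_assoc]
  refine mul_le_of_le_one_left (Real.sqrt_nonneg _) ?_
  apply four_div_pi_pow_mul_factorial_div_pow_self_le_one
  linarith [card_add_two_mul_card_eq_rank K]

end NumberField

open Effective IsDedekindDomain NumberField in
/-- **Minkowski.** Every ideal class of `O_K` contains a nonzero integral ideal all of whose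
prime divisors have residue fields of cardinality at most `√D_K`. -/
theorem exists_representative_small_primes (K : Type*) [Field K] [NumberField K] :
    ∀ c : ClassGroup (𝓞 K), ∃ I : (Ideal (𝓞 K))⁰,
      ClassGroup.mk0 I = c ∧
      ∀ P : Ideal (𝓞 K), P.IsPrime → P ∣ (I : Ideal (𝓞 K)) →
        (Nat.card (𝓞 K ⧸ P) : ℝ) ≤ Real.sqrt (absDiscr K) := by
  intro c
  obtain ⟨I, hIc, hI⟩ := exists_ideal_in_class_of_absNorm_le_sqrt_abs_discr c
  refine ⟨I, hIc, fun P _ hPI => ?_⟩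
  have hP := Ideal.natCard_quotient_le_absNorm_of_dvd (nonZeroDivisors.coe_ne_zero I) hPI
  rw [absDiscr, Nat.cast_natAbs, Int.cast_abs]
  exact (Nat.cast_le.mpr hP).trans hI
end

section
/- Let K be a number field, let G(X,Y) = Σ_{i=0}^n β_i X^{n−i} Y^i be a binary form of degree n ≥ 1 over K, and let ψ ∈ GL₂(K) have all four entries of absolute multiplicative Weil height at most H₀. Then the absolute multiplicative height of ψ*G satisfies H(ψ*G) ≤ (n+1) · 2^{3n(n+1)} · H₀^{2n(n+1)} · ∏_{i=0}^n H(β_i). -/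
open scoped NNReal
open IsDedekindDomain NumberField Polynomial

/-!
Write `ψ*G = Σᵢ βᵢ L₀^(n-i) L₁^i`, where `L₀, L₁` are the linear forms given by the rows of `ψ`.
At a finite place `v`, the ultrametric inequality for coefficients of products bounds every
coefficient of `ψ*G` by `∏ᵢ max(1, |βᵢ|_v) · (∏ⱼₗ max(1, |ψⱼₗ|_v))ⁿ`; at an infinite place the
`ℓ¹`-norm of the coefficients is submultiplicative and gives the same bound times `(n+1) 2ⁿ`.
Multiplying over all places, `H(ψ*G) ≤ (n+1) 2ⁿ ∏ᵢ H(βᵢ) (∏ⱼₗ H(ψⱼₗ))ⁿ`, and the stated bound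
is a crude consequence.
-/

namespace MvPolynomial

variable {R σ : Type*} [CommRing R] (v : AbsoluteValue R ℝ)

def l1Norm (p : MvPolynomial σ R) : ℝ := ∑ s ∈ p.support, v (p.coeff s)

lemma l1Norm_nonneg (p : MvPolynomial σ R) : 0 ≤ l1Norm v p :=
  Finset.sum_nonneg fun _ _ => v.nonneg _

lemma abv_coeff_le_l1Norm (p : MvPolynomial σ R) (s : σ →₀ ℕ) : v (p.coeff s) ≤ l1Norm v p := by
  by_cases hs : s ∈ p.support
  · exact Finset.single_le_sum (f := fun s => v (p.coeff s)) (fun _ _ => v.nonneg _) hs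
  · rw [notMem_support_iff.mp hs, v.map_zero]
    exact l1Norm_nonneg v p

lemma l1Norm_monomial (s : σ →₀ ℕ) (c : R) : l1Norm v (monomial s c) = v c := by
  classical
  rcases eq_or_ne c 0 with rfl | hc
  · simp [l1Norm]
  · simp [l1Norm, support_monomial, hc]

lemma l1Norm_C (c : R) : l1Norm v (C c : MvPolynomial σ R) = v c :=
  l1Norm_monomial v 0 c

lemma l1Norm_C_mul_X (c : R) (i : σ) : l1Norm v (C c * X i) = v c := by
  rw [C_mul_X_eq_monomial, l1Norm_monomial]

lemma l1Norm_eq_sum_of_support_subset (p : MvPolynomial σ R) {t : Finset (σ →₀ ℕ)}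
    (ht : p.support ⊆ t) : l1Norm v p = ∑ s ∈ t, v (p.coeff s) :=
  Finset.sum_subset ht fun s _ hs => by rw [notMem_support_iff.mp hs, v.map_zero]

lemma l1Norm_add_le (p q : MvPolynomial σ R) : l1Norm v (p + q) ≤ l1Norm v p + l1Norm v q := by
  classical
  rw [l1Norm_eq_sum_of_support_subset v _ support_add,
    l1Norm_eq_sum_of_support_subset v p Finset.subset_union_left,
    l1Norm_eq_sum_of_support_subset v q Finset.subset_union_right, ← Finset.sum_add_distrib]
  exact Finset.sum_le_sum fun s _ => by simpa only [coeff_add] using v.add_le _ _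

lemma l1Norm_sum_le {ι : Type*} (t : Finset ι) (f : ι → MvPolynomial σ R) :
    l1Norm v (∑ i ∈ t, f i) ≤ ∑ i ∈ t, l1Norm v (f i) :=
  Finset.le_sum_of_subadditive (l1Norm v) (by simp [l1Norm]) (l1Norm_add_le v) t f

lemma l1Norm_mul_le (p q : MvPolynomial σ R) : l1Norm v (p * q) ≤ l1Norm v p * l1Norm v q := by
  calc l1Norm v (p * q)
      = l1Norm v (∑ a ∈ p.support, ∑ b ∈ q.support, monomial (a + b) (p.coeff a * q.coeff b)) := by
        conv_lhs => rw [p.as_sum, q.as_sum, Finset.sum_mul_sum]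
        simp only [monomial_mul]
    _ ≤ ∑ a ∈ p.support, ∑ b ∈ q.support, v (p.coeff a) * v (q.coeff b) := by
        refine (l1Norm_sum_le v _ _).trans (Finset.sum_le_sum fun a _ => ?_)
        refine (l1Norm_sum_le v _ _).trans (Finset.sum_le_sum fun b _ => ?_)
        rw [l1Norm_monomial, v.map_mul]
    _ = l1Norm v p * l1Norm v q := by rw [l1Norm, l1Norm, Finset.sum_mul_sum]

lemma l1Norm_pow_le [Nontrivial R] (p : MvPolynomial σ R) (k : ℕ) :
    l1Norm v (p ^ k) ≤ l1Norm v p ^ k := by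
  induction k with
  | zero => rw [pow_zero, pow_zero, ← C_1, l1Norm_C, v.map_one]
  | succ k ih =>
    rw [pow_succ, pow_succ]
    exact (l1Norm_mul_le v _ _).trans (mul_le_mul_of_nonneg_right ih (l1Norm_nonneg v p))

lemma l1Norm_C_mul_X_add_C_mul_X_le (a b : R) (i j : σ) :
    l1Norm v (C a * X i + C b * X j) ≤ v a + v b :=
  (l1Norm_add_le v _ _).trans_eq (by rw [l1Norm_C_mul_X, l1Norm_C_mul_X])

lemma abv_coeff_monomial_le (t s : σ →₀ ℕ) (c : R) : v ((monomial t c).coeff s) ≤ v c := by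
  classical
  rw [coeff_monomial]
  split_ifs
  · exact le_rfl
  · simp

end MvPolynomial

namespace IsNonarchimedean

variable {R σ : Type*} [CommRing R] {v : AbsoluteValue R ℝ}

lemma apply_sum_le_of_forall_le (hv : IsNonarchimedean v) {ι : Type*} {t : Finset ι}
    {f : ι → R} {B : ℝ} (hB : 0 ≤ B) (h : ∀ i ∈ t, v (f i) ≤ B) : v (∑ i ∈ t, f i) ≤ B := by
  rcases t.eq_empty_or_nonempty with rfl | ht
  · simpa using hB
  · exact (hv.apply_sum_le_sup ht).trans (Finset.sup'_le ht _ h)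

lemma abv_coeff_mul_le (hv : IsNonarchimedean v) {p q : MvPolynomial σ R} {a b : ℝ}
    (hp : ∀ s, v (p.coeff s) ≤ a) (hq : ∀ s, v (q.coeff s) ≤ b) (s : σ →₀ ℕ) :
    v ((p * q).coeff s) ≤ a * b := by
  classical
  have ha : 0 ≤ a := (v.nonneg _).trans (hp 0)
  rw [MvPolynomial.coeff_mul]
  refine hv.apply_sum_le_of_forall_le (mul_nonneg ha ((v.nonneg _).trans (hq 0))) fun x _ => ?_
  rw [v.map_mul]
  exact mul_le_mul (hp _) (hq _) (v.nonneg _) ha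

lemma abv_coeff_pow_le [Nontrivial R] (hv : IsNonarchimedean v) {p : MvPolynomial σ R} {a : ℝ}
    (hp : ∀ s, v (p.coeff s) ≤ a) (k : ℕ) (s : σ →₀ ℕ) : v ((p ^ k).coeff s) ≤ a ^ k := by
  induction k generalizing s with
  | zero =>
    classical
    rw [pow_zero, pow_zero, MvPolynomial.coeff_one]
    split_ifs <;> simp
  | succ k ih =>
    rw [pow_succ, pow_succ]
    exact hv.abv_coeff_mul_le ih hp s

lemma abv_coeff_C_mul_X_add_C_mul_X_le (hv : IsNonarchimedean v) (a b : R) (i j : σ)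
    (s : σ →₀ ℕ) :
    v ((MvPolynomial.C a * MvPolynomial.X i + MvPolynomial.C b * MvPolynomial.X j).coeff s) ≤
      max (v a) (v b) := by
  rw [MvPolynomial.coeff_add, MvPolynomial.C_mul_X_eq_monomial, MvPolynomial.C_mul_X_eq_monomial]
  exact (hv _ _).trans <| max_le_max (MvPolynomial.abv_coeff_monomial_le v _ _ _)
    (MvPolynomial.abv_coeff_monomial_le v _ _ _)

end IsNonarchimedean

namespace Effective

open MvPolynomial

variable {K : Type*} [Field K]

noncomputable def rowForm (ψ : Matrix (Fin 2) (Fin 2) K) (j : Fin 2) : MvPolynomial (Fin 2) K :=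
  MvPolynomial.C (ψ j 0) * MvPolynomial.X 0 + MvPolynomial.C (ψ j 1) * MvPolynomial.X 1

lemma pullback_binForm (n : ℕ) (β : Fin (n + 1) → K) (ψ : Matrix (Fin 2) (Fin 2) K) :
    pullback ψ (binForm n β) =
      ∑ i : Fin (n + 1), MvPolynomial.C (β i) * rowForm ψ 0 ^ (n - i) * rowForm ψ 1 ^ (i : ℕ) := by
  simp only [pullback, binForm, map_sum, map_mul, map_pow, bind₁_X_right, bind₁_C_right, rowForm]

variable (n : ℕ) (β : Fin (n + 1) → K) (ψ : Matrix (Fin 2) (Fin 2) K)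

lemma abv_bfCoeff_pullback_binForm_le (v : AbsoluteValue K ℝ) (k : Fin (n + 1)) :
    v (bfCoeff n (pullback ψ (binForm n β)) k) ≤
      (n + 1) * 2 ^ n *
        ((∏ i, max (v (β i)) 1) * (∏ p : Fin 2 × Fin 2, max (v (ψ p.1 p.2)) 1) ^ n) := by
  set B := ∏ i, max (v (β i)) 1
  set M := ∏ p : Fin 2 × Fin 2, max (v (ψ p.1 p.2)) 1
  have hβ (i : Fin (n + 1)) : v (β i) ≤ B :=
    Finset.le_prod_max_one (Finset.mem_univ i) fun i => v (β i)
  have hψ (j l : Fin 2) : v (ψ j l) ≤ M :=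
    Finset.le_prod_max_one (Finset.mem_univ (j, l)) fun p : Fin 2 × Fin 2 => v (ψ p.1 p.2)
  have hrow (j : Fin 2) : l1Norm v (rowForm ψ j) ≤ 2 * M :=
    (l1Norm_C_mul_X_add_C_mul_X_le v _ _ _ _).trans (by linarith [hψ j 0, hψ j 1])
  have hpow (j : Fin 2) (m : ℕ) : l1Norm v (rowForm ψ j ^ m) ≤ (2 * M) ^ m :=
    (l1Norm_pow_le v _ m).trans (pow_le_pow_left₀ (l1Norm_nonneg v _) (hrow j) m)
  have hterm (i : Fin (n + 1)) :
      l1Norm v (MvPolynomial.C (β i) * rowForm ψ 0 ^ (n - i) * rowForm ψ 1 ^ (i : ℕ)) ≤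
        B * (2 * M) ^ n := by
    calc _ ≤ l1Norm v (MvPolynomial.C (β i)) * l1Norm v (rowForm ψ 0 ^ (n - i)) *
          l1Norm v (rowForm ψ 1 ^ (i : ℕ)) := by
          grw [l1Norm_mul_le, l1Norm_mul_le]
          exact l1Norm_nonneg v _
      _ ≤ B * (2 * M) ^ (n - i) * (2 * M) ^ (i : ℕ) := by
          rw [l1Norm_C]
          gcongr
          exacts [l1Norm_nonneg v _, l1Norm_nonneg v _, hβ i, hpow 0 _, hpow 1 _]
      _ = B * (2 * M) ^ n := by rw [mul_assoc, ← pow_add, Nat.sub_add_cancel i.is_le]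
  calc _ ≤ l1Norm v (pullback ψ (binForm n β)) := abv_coeff_le_l1Norm v _ _
    _ ≤ ∑ i : Fin (n + 1), B * (2 * M) ^ n := by
        rw [pullback_binForm]
        exact (l1Norm_sum_le v _ _).trans (Finset.sum_le_sum fun i _ => hterm i)
    _ = _ := by
        rw [Finset.sum_const, Finset.card_univ, Fintype.card_fin, nsmul_eq_mul]
        push_cast
        ring

lemma _root_.IsNonarchimedean.abv_bfCoeff_pullback_binForm_le {v : AbsoluteValue K ℝ}
    (hv : IsNonarchimedean v) (k : Fin (n + 1)) :
    v (bfCoeff n (pullback ψ (binForm n β)) k) ≤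
      (∏ i, max (v (β i)) 1) * (∏ p : Fin 2 × Fin 2, max (v (ψ p.1 p.2)) 1) ^ n := by
  set B := ∏ i, max (v (β i)) 1
  set M := ∏ p : Fin 2 × Fin 2, max (v (ψ p.1 p.2)) 1
  have hβ (i : Fin (n + 1)) (s : Fin 2 →₀ ℕ) : v ((MvPolynomial.C (β i)).coeff s) ≤ B :=
    (abv_coeff_monomial_le v _ _ _).trans
      (Finset.le_prod_max_one (Finset.mem_univ i) fun i => v (β i))
  have hψ (j l : Fin 2) : v (ψ j l) ≤ M :=
    Finset.le_prod_max_one (Finset.mem_univ (j, l)) fun p : Fin 2 × Fin 2 => v (ψ p.1 p.2)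
  have hrow (j : Fin 2) (s : Fin 2 →₀ ℕ) : v ((rowForm ψ j).coeff s) ≤ M :=
    (hv.abv_coeff_C_mul_X_add_C_mul_X_le _ _ _ _ s).trans (max_le (hψ j 0) (hψ j 1))
  have hB : 0 ≤ B * M ^ n := by positivity
  rw [bfCoeff, pullback_binForm, MvPolynomial.coeff_sum]
  refine hv.apply_sum_le_of_forall_le hB fun i _ => ?_
  refine (hv.abv_coeff_mul_le (hv.abv_coeff_mul_le (hβ i) (hv.abv_coeff_pow_le (hrow 0) _))
    (hv.abv_coeff_pow_le (hrow 1) _) _).trans_eq ?_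
  rw [mul_assoc, ← pow_add, Nat.sub_add_cancel i.is_le]

end Effective

namespace Height

open AdmissibleAbsValues

lemma iSup_abv_cons_one_le {K : Type*} [Field K] (v : AbsoluteValue K ℝ) {m : ℕ}
    {x : Fin m → K} {B : ℝ} (hB : 1 ≤ B) (hx : ∀ k, v (x k) ≤ B) :
    ⨆ k, v ((Fin.cons 1 x : Fin (m + 1) → K) k) ≤ B :=
  ciSup_le fun k => Fin.cases (by simpa using hB) (fun k => by simpa using hx k) k

variable {K : Type*} [Field K] [AdmissibleAbsValues K]

theorem mulHeight_cons_one_le_of_forall_abv_le {ι : Type*} [Fintype ι] {m : ℕ} (x : Fin m → K)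
    (y : ι → K) (e : ι → ℕ) {C : ℝ} (hC : 1 ≤ C)
    (harch : ∀ v ∈ archAbsVal (K := K), ∀ k, v (x k) ≤ C * ∏ i, max (v (y i)) 1 ^ e i)
    (hnonarch : ∀ v ∈ nonarchAbsVal (K := K), ∀ k, v (x k) ≤ ∏ i, max (v (y i)) 1 ^ e i) :
    mulHeight (Fin.cons 1 x : Fin (m + 1) → K) ≤
      C ^ totalWeight K * ∏ i, mulHeight₁ (y i) ^ e i := by
  have hx : (Fin.cons 1 x : Fin (m + 1) → K) ≠ 0 := fun h => one_ne_zero (congrFun h 0)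
  have hprod (v : AbsoluteValue K ℝ) : 1 ≤ ∏ i, max (v (y i)) 1 ^ e i :=
    Finset.one_le_prod fun i _ => one_le_pow₀ (le_max_right _ _)
  have harchEq : ∏ i, ((archAbsVal (K := K)).map fun v => max (v (y i)) 1).prod ^ e i =
      ((archAbsVal (K := K)).map fun v => ∏ i, max (v (y i)) 1 ^ e i).prod := by
    simp only [← Multiset.prod_map_pow, Multiset.prod_map_prod]
  have hnonarchEq : ∏ i, (∏ᶠ v : nonarchAbsVal (K := K), max (v.val (y i)) 1) ^ e i =
      ∏ᶠ v : nonarchAbsVal (K := K), ∏ i, max (v.val (y i)) 1 ^ e i := by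
    rw [finprod_prod_comm _ _ fun i _ => by fun_prop]
    exact Finset.prod_congr rfl fun i _ => finprod_pow (by fun_prop) _
  have hconst : C ^ totalWeight K = ((archAbsVal (K := K)).map fun _ => C).prod := by
    rw [Multiset.map_const', Multiset.prod_replicate, totalWeight]
  rw [mulHeight_eq hx]
  simp only [mulHeight₁_eq, mul_pow, Finset.prod_mul_distrib, harchEq, hnonarchEq, hconst,
    ← mul_assoc, ← Multiset.prod_map_mul]
  gcongr
  · exact finprod_nonneg fun v => Real.iSup_nonneg_of_nonnegHomClass v.val _
  · exact Multiset.prod_map_nonneg fun v _ => by positivity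
  · exact Multiset.prod_map_le_prod_map₀ _ _ (fun v _ => Real.iSup_nonneg_of_nonnegHomClass v _)
      fun v hv => iSup_abv_cons_one_le v (one_le_mul_of_one_le_of_one_le hC (hprod v))
        (harch v hv)
  · exact finprod_le_finprod (by fun_prop) (fun v => Real.iSup_nonneg_of_nonnegHomClass v.val _)
      (by fun_prop) fun v => iSup_abv_cons_one_le v.val (hprod v.val) (hnonarch v.val v.prop)

end Height

namespace Effective

variable {K : Type*} [Field K] [NumberField K]

lemma vAbs_eq_finitePlace (v : HeightOneSpectrum (𝓞 K)) (x : K) :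
    vAbs v x = FinitePlace.equivHeightOneSpectrum.symm v x := by
  rw [FinitePlace.equivHeightOneSpectrum_symm_apply, FinitePlace.norm_embedding]
  rfl

lemma mulHeight_eq_rpow {m : ℕ} {x : Fin m → K} (hx : x ≠ 0) :
    mulHeight x = Height.mulHeight x ^ ((Module.finrank ℚ K : ℝ)⁻¹) := by
  rw [mulHeight, NumberField.mulHeight_eq hx,
    ← finprod_comp_equiv FinitePlace.equivHeightOneSpectrum.symm]
  simp only [vAbs_eq_finitePlace]

lemma mulHeight₁_eq_rpow (α : K) :
    mulHeight₁ α = Height.mulHeight₁ α ^ ((Module.finrank ℚ K : ℝ)⁻¹) := by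
  rw [mulHeight₁, mulHeight_eq_rpow (by simp), Height.mulHeight₁_eq_mulHeight,
    Height.mulHeight_swap]

lemma one_le_mulHeight₁ (α : K) : 1 ≤ mulHeight₁ α := by
  rw [mulHeight₁_eq_rpow]
  exact Real.one_le_rpow (Height.one_le_mulHeight₁ α) (by positivity)

theorem bfMulHeight_pullback_binForm_le (n : ℕ) (β : Fin (n + 1) → K)
    (ψ : Matrix (Fin 2) (Fin 2) K) :
    bfMulHeight n (pullback ψ (binForm n β)) ≤
      (n + 1) * 2 ^ n *
        ((∏ i, mulHeight₁ (β i)) * (∏ p : Fin 2 × Fin 2, mulHeight₁ (ψ p.1 p.2)) ^ n) := by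
  set c := bfCoeff n (pullback ψ (binForm n β))
  have hc : (Fin.cons 1 c : Fin (n + 1 + 1) → K) ≠ 0 := fun h => one_ne_zero (congrFun h 0)
  let y : Fin (n + 1) ⊕ Fin 2 × Fin 2 → K := Sum.elim β fun p => ψ p.1 p.2
  let e : Fin (n + 1) ⊕ Fin 2 × Fin 2 → ℕ := Sum.elim (fun _ => 1) fun _ => n
  have hC : (1 : ℝ) ≤ (n + 1) * 2 ^ n :=
    one_le_mul_of_one_le_of_one_le (by simp) (one_le_pow₀ one_le_two)
  have key := Height.mulHeight_cons_one_le_of_forall_abv_le c y e hC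
    (fun v _ k => by
      simpa [y, e, Fintype.prod_sum_type, Finset.prod_pow] using
        abv_bfCoeff_pullback_binForm_le n β ψ v k)
    (fun v hv k => by
      simpa [y, e, Fintype.prod_sum_type, Finset.prod_pow] using
        (Height.AdmissibleAbsValues.isNonarchimedean v hv).abv_bfCoeff_pullback_binForm_le n β ψ k)
  rw [NumberField.totalWeight_eq_finrank] at key
  rw [bfMulHeight, mulHeight_eq_rpow hc]
  simp only [mulHeight₁_eq_rpow]
  set D := Module.finrank ℚ K
  have hD : D ≠ 0 := Module.finrank_pos.ne'
  calc _ ≤ (((n + 1) * 2 ^ n) ^ D * ∏ i, Height.mulHeight₁ (y i) ^ e i) ^ (D : ℝ)⁻¹ :=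
        Real.rpow_le_rpow (Height.mulHeight_pos _).le key (by positivity)
    _ = (n + 1) * 2 ^ n * ∏ i, (Height.mulHeight₁ (y i) ^ (D : ℝ)⁻¹) ^ e i := by
        rw [Real.mul_rpow (by positivity) (by positivity),
          Real.pow_rpow_inv_natCast (by positivity) hD,
          ← Real.finsetProd_rpow _ _ fun i _ => by positivity]
        simp only [Real.rpow_pow_comm (Height.mulHeight₁_nonneg _)]
    _ = _ := by
        simp [y, e, Fintype.prod_sum_type, Finset.prod_pow]

end Effective

open Effective IsDedekindDomain NumberField in
theorem pullback_height_general (K : Type*) [Field K] [NumberField K] (n : ℕ)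
    (β : Fin (n + 1) → K) (ψ : Matrix (Fin 2) (Fin 2) K)
    (H₀ : ℝ) (hH : ∀ i j, mulHeight₁ (ψ i j) ≤ H₀) :
    bfMulHeight n (pullback ψ (binForm n β)) ≤
      ((n : ℝ) + 1) * 2 ^ (3 * n * (n + 1)) * H₀ ^ (2 * n * (n + 1)) *
        ∏ i, mulHeight₁ (β i) := by
  have hH₀ : 1 ≤ H₀ := (one_le_mulHeight₁ (ψ 0 0)).trans (hH 0 0)
  have hP : 0 ≤ ∏ p : Fin 2 × Fin 2, mulHeight₁ (ψ p.1 p.2) :=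
    Finset.prod_nonneg fun p _ => zero_le_one.trans (one_le_mulHeight₁ _)
  have hψ : (∏ p : Fin 2 × Fin 2, mulHeight₁ (ψ p.1 p.2)) ^ n ≤ H₀ ^ (2 * n * (n + 1)) :=
    calc _ ≤ (H₀ ^ 4) ^ n := by
          gcongr
          exact (Finset.prod_le_prod (fun p _ => zero_le_one.trans (one_le_mulHeight₁ _))
            fun (p : Fin 2 × Fin 2) _ => hH p.1 p.2).trans_eq (by rw [Finset.prod_const]; rfl)
      _ ≤ _ := by
          rw [← pow_mul]
          exact pow_le_pow_right₀ hH₀ (by nlinarith [Nat.le_mul_self n])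
  have h2 : (2 : ℝ) ^ n ≤ 2 ^ (3 * n * (n + 1)) := pow_le_pow_right₀ one_le_two (by nlinarith)
  have hβ : 0 ≤ ∏ i, mulHeight₁ (β i) :=
    Finset.prod_nonneg fun i _ => zero_le_one.trans (one_le_mulHeight₁ _)
  calc _ ≤ (n + 1) * 2 ^ n *
        ((∏ i, mulHeight₁ (β i)) * (∏ p : Fin 2 × Fin 2, mulHeight₁ (ψ p.1 p.2)) ^ n) :=
        bfMulHeight_pullback_binForm_le n β ψ
    _ = (n + 1) * 2 ^ n * (∏ p : Fin 2 × Fin 2, mulHeight₁ (ψ p.1 p.2)) ^ n *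
        ∏ i, mulHeight₁ (β i) := by ring
    _ ≤ _ := by gcongr

open Effective IsDedekindDomain NumberField in
/-- Height bound for the pullback of a binary form by a matrix with entries of height at
most `H₀`. -/
theorem pullback_height (K : Type*) [Field K] [NumberField K] (n : ℕ) (hn : 1 ≤ n)
    (β : Fin (n + 1) → K) (ψ : Matrix (Fin 2) (Fin 2) K) (hψ : IsUnit ψ.det)
    (H₀ : ℝ) (hH : ∀ i j, mulHeight₁ (ψ i j) ≤ H₀) :
    bfMulHeight n (pullback ψ (binForm n β)) ≤
      ((n : ℝ) + 1) * 2 ^ (3 * n * (n + 1)) * H₀ ^ (2 * n * (n + 1)) *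
        ∏ i, mulHeight₁ (β i) :=
  pullback_height_general K n β ψ H₀ hH
end
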